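/- Let n = 2m with m ≥ 2 and let P_n be the regular n-gon. For each k with 0 ≤ k < m, the k-th meridian γ_k of the double of P_n is a half-geodesic of period 2w with respect to the pseudometric D: namely D(γ_k(t + 2w), γ_k(t)) = 0 for all t ∈ ℝ, and D(γ_k(s), γ_k(t)) = |s − t| whenever |s − t| ≤ w. -/

import Mathlib

open Real

noncomputable section

/-- The Euclidean plane. -/
abbrev E2 : Type := EuclideanSpace ℝ (Fin 2)

/-- The point `(x, y)` in the Euclidean plane. -/
def pt (x y : ℝ) : E2 := !₂[x, y]

/-- The regular `n`-gon: the convex hull of the `n`-th roots of unity. -/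
def Pgon (n : ℕ) : Set E2 :=
  convexHull ℝ
    (Set.range fun k : Fin n => pt (Real.cos (2 * π * k / n)) (Real.sin (2 * π * k / n)))

/-- The pseudometric of the double of a plane set `P`: two points on the same
face are at their Euclidean distance, while points on opposite faces are at
the infimum over boundary points `z ∈ ∂P` of `‖x - z‖ + ‖z - y‖`. -/
def doubleDist (P : Set E2) (p q : Bool × E2) : ℝ :=
  if p.1 = q.1 then ‖p.2 - q.2‖
  else sInf ((fun z => ‖p.2 - z‖ + ‖z - q.2‖) '' frontier P)

/-- The unit outward normal to the `k`-th edge of the regular `n`-gon. -/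
def outNormal (n k : ℕ) : E2 :=
  pt (Real.cos ((2 * k + 1) * π / n)) (Real.sin ((2 * k + 1) * π / n))

/-- The `k`-th meridian of the double of the regular `n`-gon (`n` even),
periodic of period `2w` where `w = 2 cos(π/n)`: it runs through the center of
the top face from the midpoint `m_k = a • â_k` of the `k`-th edge to the
midpoint of the opposite edge, then back through the bottom face. -/
def meridian (n k : ℕ) (t : ℝ) : Bool × E2 :=
  let a := Real.cos (π / n)
  let w := 2 * a
  let t' := t - 2 * w * (⌊t / (2 * w)⌋ : ℝ)
  if t' < w then (false, a • outNormal n k - t' • outNormal n k)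
  else (true, -(a • outNormal n k) + (t' - w) • outNormal n k)

/-!
The disk of radius `a = cos (π / n)` about the centre is inscribed in `P_n`: `P_n` is closed and
convex, and in every direction some vertex lies within angle `π / n`, so the support function of
`P_n` is at least `a` everywhere. This disk touches `∂P_n` at the midpoints `±a • â_k` of two
opposite edges. Thus every boundary point `z` has `‖z‖ ≥ a`, and the triangle inequality for
`2 • z = (z - x) + (z - y) + (x + y)` shows that a path from `x` to `y` through `z` is at least
`2a - ‖x + y‖` long; for `x`, `y` on the diameter through `â_k` this is attained at the nearer
midpoint. Hence `D` along the meridian is the distance on the circle `ℝ ⧸ 4aℤ`, which is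
`|s - t|` as long as `|s - t| ≤ 2a = w`.
-/

open Set Metric
open scoped RealInnerProductSpace

lemma cos_le_cos_of_le_abs_sub_int_mul_two_pi {x δ : ℝ} (hδ : 0 ≤ δ)
    (h : ∀ q : ℤ, δ ≤ |x - q * (2 * π)|) : cos x ≤ cos δ := by
  set q := round (x / (2 * π))
  have hq : |x - q * (2 * π)| ≤ π :=
    calc |x - q * (2 * π)| = |2 * π * (x / (2 * π) - q)| := by congr 1; field_simp
      _ = 2 * π * |x / (2 * π) - q| := by rw [abs_mul, abs_of_pos two_pi_pos]
      _ ≤ 2 * π * (1 / 2) := by gcongr; exact abs_sub_round _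
      _ = π := by ring
  rw [← cos_sub_int_mul_two_pi x q, ← cos_abs]
  exact cos_le_cos_of_nonneg_of_le_pi hδ hq (h q)

lemma cos_odd_mul_pi_div_le {n : ℕ} (hn : 0 < n) {r : ℤ} (hr : Odd r) :
    cos (r * π / n) ≤ cos (π / n) := by
  refine cos_le_cos_of_le_abs_sub_int_mul_two_pi (by positivity) fun q => ?_
  have hne : r - 2 * n * q ≠ 0 := by
    intro h
    exact Int.not_even_iff_odd.mpr hr ⟨n * q, by linarith⟩
  have h1 : (1 : ℝ) ≤ |((r - 2 * n * q : ℤ) : ℝ)| := by exact_mod_cast Int.one_le_abs hne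
  calc π / n = 1 * (π / n) := (one_mul _).symm
    _ ≤ |((r - 2 * n * q : ℤ) : ℝ)| * (π / n) := by gcongr
    _ = |((r - 2 * n * q : ℤ) : ℝ) * (π / n)| := by
        rw [abs_mul, abs_of_pos (div_pos pi_pos (by exact_mod_cast hn))]
    _ = |r * π / n - q * (2 * π)| := by congr 1; push_cast; field_simp

lemma cos_pi_div_pos {n : ℕ} (hn : 2 < n) : 0 < cos (π / n) := by
  have : 0 < π / n := div_pos pi_pos (by positivity)
  refine cos_pos_of_mem_Ioo ⟨by linarith [pi_pos], ?_⟩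
  exact div_lt_div_of_pos_left pi_pos two_pos (by exact_mod_cast hn)

lemma AddCircle.norm_coe_eq_half_sub_abs {p x : ℝ} (hx : x ∈ Icc 0 p) :
    ‖(x : AddCircle p)‖ = p / 2 - |x - p / 2| := by
  obtain ⟨hx0, hxp⟩ := hx
  obtain rfl | hp := (hx0.trans hxp).eq_or_lt
  · obtain rfl : x = 0 := le_antisymm hxp hx0
    simp
  rcases le_total x (p / 2) with h | h
  · rw [(AddCircle.norm_coe_eq_abs_iff p hp.ne').2
      (by rw [abs_of_nonneg hx0, abs_of_pos hp]; exact h), abs_of_nonneg hx0,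
      abs_of_nonpos (by linarith)]
    ring
  · rw [← sub_add_cancel x p, AddCircle.coe_add_period,
      (AddCircle.norm_coe_eq_abs_iff p hp.ne').2
        (by rw [abs_of_nonpos (by linarith), abs_of_pos hp]; linarith),
      abs_of_nonpos (by linarith), abs_of_nonneg (by linarith)]
    ring

lemma AddCircle.coe_toIcoMod {p : ℝ} (hp : 0 < p) (t : ℝ) :
    ((toIcoMod hp 0 t : ℝ) : AddCircle p) = t := by
  rw [← self_sub_toIcoDiv_zsmul, AddCircle.coe_sub, AddCircle.coe_zsmul, AddCircle.coe_period,
    smul_zero, sub_zero]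

lemma le_norm_of_ball_subset_of_mem_frontier {F : Type*} [SeminormedAddCommGroup F] {s : Set F}
    {r : ℝ} (hs : ball 0 r ⊆ s) {z : F} (hz : z ∈ frontier s) : r ≤ ‖z‖ := by
  by_contra h
  exact hz.2 (interior_maximal hs isOpen_ball (mem_ball_zero_iff.mpr (not_le.mp h)))

section InnerProductSpace

variable {F : Type*} [NormedAddCommGroup F] [InnerProductSpace ℝ F]

lemma notMem_interior_of_inner_le_of_inner_eq {s : Set F} {A p : F} {c : ℝ} (hA : A ≠ 0)
    (hs : ∀ x ∈ s, ⟪A, x⟫ ≤ c) (hp : ⟪A, p⟫ = c) : p ∉ interior s := by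
  intro hint
  have hmax : IsLocalMax (fun x => ⟪A, x⟫) p :=
    Filter.mem_of_superset (mem_interior_iff_mem_nhds.mp hint) fun x hx =>
      (hs x hx).trans_eq hp.symm
  have hzero : innerSL ℝ A = 0 := hmax.hasFDerivAt_eq_zero (innerSL ℝ A).hasFDerivAt
  exact hA (by simpa using congrArg (fun f => f A) hzero)

lemma ball_subset_of_forall_exists_inner_ge [CompleteSpace F] {s : Set F} (hconv : Convex ℝ s)
    (hclosed : IsClosed s) {r : ℝ} (h : ∀ y : F, ∃ p ∈ s, r * ‖y‖ ≤ ⟪y, p⟫) :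
    ball 0 r ⊆ s := by
  intro z hz
  by_contra hzs
  obtain ⟨f, u, hfs, hfz⟩ := geometric_hahn_banach_closed_point hconv hclosed hzs
  set y := (InnerProductSpace.toDual ℝ F).symm f
  have hf : ∀ x, f x = ⟪y, x⟫ := fun x => InnerProductSpace.toDual_symm_apply.symm
  obtain ⟨p, hp, hrp⟩ := h y
  have hsep : ⟪y, p⟫ < ⟪y, z⟫ := by rw [← hf, ← hf]; exact (hfs p hp).trans hfz
  have hcs : ⟪y, z⟫ ≤ ‖y‖ * ‖z‖ := real_inner_le_norm y z
  rw [mem_ball_zero_iff] at hz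
  nlinarith [norm_nonneg y]

end InnerProductSpace

def unitVec (θ : ℝ) : E2 := pt (cos θ) (sin θ)

lemma inner_unitVec (θ φ : ℝ) : ⟪unitVec θ, unitVec φ⟫ = cos (θ - φ) := by
  simp only [unitVec, pt, PiLp.inner_apply, RCLike.inner_apply, ringHom_apply, Fin.sum_univ_two,
    Fin.isValue, Matrix.cons_val_zero, Matrix.cons_val_one, Matrix.cons_val_fin_one, cos_sub]
  ring

lemma norm_unitVec (θ : ℝ) : ‖unitVec θ‖ = 1 := by
  rw [norm_eq_sqrt_real_inner, inner_unitVec, sub_self, cos_zero, sqrt_one]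

lemma unitVec_add_pi (θ : ℝ) : unitVec (θ + π) = -unitVec θ := by
  ext i; fin_cases i <;> simp [unitVec, pt, cos_add_pi, sin_add_pi]

lemma unitVec_add_int_mul_two_pi (θ : ℝ) (q : ℤ) :
    unitVec (θ + q * (2 * π)) = unitVec θ := by
  rw [unitVec, cos_add_int_mul_two_pi, sin_add_int_mul_two_pi, unitVec]

lemma unitVec_sub_add_unitVec_add (θ δ : ℝ) :
    unitVec (θ - δ) + unitVec (θ + δ) = (2 * cos δ) • unitVec θ := by
  ext i; fin_cases i <;>
    simp only [unitVec, pt, cos_sub, sin_sub, cos_add, sin_add, Fin.zero_eta, Fin.mk_one,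
      Fin.isValue, PiLp.add_apply, PiLp.smul_apply, smul_eq_mul, Matrix.cons_val_zero,
      Matrix.cons_val_one, Matrix.cons_val_fin_one] <;> ring

lemma exists_eq_norm_smul_unitVec (y : E2) : ∃ φ, y = ‖y‖ • unitVec φ := by
  set c : ℂ := ⟨y 0, y 1⟩
  have hc : ‖y‖ = ‖c‖ := by
    simp [EuclideanSpace.norm_eq, Complex.norm_eq_sqrt_sq_add_sq, Fin.sum_univ_two, c]
  refine ⟨c.arg, ?_⟩
  ext i; fin_cases i
  · simp only [unitVec, pt, hc]
    exact (Complex.norm_mul_cos_arg c).symm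
  · simp only [unitVec, pt, hc]
    exact (Complex.norm_mul_sin_arg c).symm

def vertex (n : ℕ) (j : ℤ) : E2 := unitVec (2 * π * j / n)

lemma vertex_mem_Pgon {n : ℕ} (hn : 0 < n) (j : ℤ) : vertex n j ∈ Pgon n := by
  apply subset_convexHull
  have hj : 0 ≤ j % n := Int.emod_nonneg j (by omega)
  have hjn : j % n < n := Int.emod_lt_of_pos j (by omega)
  refine ⟨⟨(j % n).toNat, by omega⟩, ?_⟩
  have hcast : (((j % n).toNat : ℕ) : ℝ) = j - (j / n : ℤ) * n := by
    rw [← Int.cast_natCast, Int.toNat_of_nonneg hj, Int.emod_def]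
    push_cast
    ring
  show unitVec (2 * π * (((j % n).toNat : ℕ) : ℝ) / n) = vertex n j
  rw [hcast, vertex, ← unitVec_add_int_mul_two_pi _ (j / n)]
  congr 1
  field_simp
  ring

lemma convex_Pgon (n : ℕ) : Convex ℝ (Pgon n) := convex_convexHull ℝ _

lemma isClosed_Pgon (n : ℕ) : IsClosed (Pgon n) := (finite_range _).isClosed_convexHull ℝ

lemma inner_outNormal_le_of_mem_Pgon {n : ℕ} (hn : 0 < n) (k : ℕ) {x : E2} (hx : x ∈ Pgon n) :
    ⟪outNormal n k, x⟫ ≤ cos (π / n) := by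
  have hconv : Convex ℝ {x : E2 | ⟪outNormal n k, x⟫ ≤ cos (π / n)} :=
    convex_halfSpace_le (innerₗ E2 (outNormal n k)).isLinear _
  refine convexHull_min ?_ hconv hx
  rintro _ ⟨j, rfl⟩
  show ⟪unitVec _, unitVec _⟫ ≤ _
  rw [inner_unitVec]
  convert cos_odd_mul_pi_div_le hn (r := 2 * k + 1 - 2 * j) ⟨k - j, by ring⟩ using 2
  push_cast
  ring

lemma exists_vertex_inner_ge {n : ℕ} (hn : 0 < n) (y : E2) :
    ∃ j : ℤ, cos (π / n) * ‖y‖ ≤ ⟪y, vertex n j⟫ := by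
  obtain ⟨φ, hφ⟩ := exists_eq_norm_smul_unitVec y
  set j := round (φ * n / (2 * π))
  have hclose : |φ - 2 * π * j / n| ≤ π / n :=
    calc |φ - 2 * π * j / n| = |2 * π / n * (φ * n / (2 * π) - j)| := by congr 1; field_simp
      _ = 2 * π / n * |φ * n / (2 * π) - j| := by rw [abs_mul, abs_of_pos (by positivity)]
      _ ≤ 2 * π / n * (1 / 2) := by gcongr; exact abs_sub_round _
      _ = π / n := by ring
  refine ⟨j, ?_⟩
  conv_rhs => rw [hφ]
  rw [real_inner_smul_left, vertex, inner_unitVec, mul_comm, ← cos_abs (φ - _)]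
  gcongr
  exact cos_le_cos_of_nonneg_of_le_pi (abs_nonneg _)
    (div_le_self pi_pos.le (by exact_mod_cast hn)) hclose

lemma ball_subset_Pgon {n : ℕ} (hn : 0 < n) : ball 0 (cos (π / n)) ⊆ Pgon n :=
  ball_subset_of_forall_exists_inner_ge (convex_Pgon n) (isClosed_Pgon n) fun y =>
    let ⟨j, hj⟩ := exists_vertex_inner_ge hn y
    ⟨_, vertex_mem_Pgon hn j, hj⟩

lemma cos_smul_outNormal_mem_Pgon {n : ℕ} (hn : 0 < n) (k : ℕ) :
    cos (π / n) • outNormal n k ∈ Pgon n := by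
  have hmid : cos (π / n) • outNormal n k
      = (1 / 2 : ℝ) • vertex n k + (1 / 2 : ℝ) • vertex n (k + 1) := by
    have hsum := unitVec_sub_add_unitVec_add ((2 * k + 1) * π / n) (π / n)
    rw [show (2 * k + 1) * π / n - π / n = 2 * π * (k : ℤ) / n by push_cast; ring,
      show (2 * k + 1) * π / n + π / n = 2 * π * (k + 1 : ℤ) / n by push_cast; ring] at hsum
    rw [← smul_add, vertex, vertex, hsum, smul_smul]
    congr 1
    ring
  rw [hmid]
  exact convex_Pgon n (vertex_mem_Pgon hn k) (vertex_mem_Pgon hn (k + 1)) (by norm_num)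
    (by norm_num) (by norm_num)

lemma norm_outNormal (n k : ℕ) : ‖outNormal n k‖ = 1 := norm_unitVec _

lemma cos_smul_outNormal_mem_frontier {n : ℕ} (hn : 0 < n) (k : ℕ) :
    cos (π / n) • outNormal n k ∈ frontier (Pgon n) := by
  rw [(isClosed_Pgon n).frontier_eq]
  refine ⟨cos_smul_outNormal_mem_Pgon hn k, notMem_interior_of_inner_le_of_inner_eq
    (norm_ne_zero_iff.mp ((norm_outNormal n k).trans_ne one_ne_zero))
    (fun x hx => inner_outNormal_le_of_mem_Pgon hn k hx) ?_⟩
  rw [real_inner_smul_right, real_inner_self_eq_norm_sq, norm_outNormal, one_pow, mul_one]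

lemma outNormal_add_half {m : ℕ} (hm : 0 < m) (k : ℕ) :
    outNormal (2 * m) (k + m) = -outNormal (2 * m) k := by
  rw [outNormal, outNormal, ← unitVec, ← unitVec, ← unitVec_add_pi]
  congr 1
  field_simp
  push_cast
  ring

section DiameterLoop

variable {P : Set E2} {a : ℝ} {A : E2}

lemma doubleDist_smul_of_ne (hA : ‖A‖ = 1) (hfar : ∀ z ∈ frontier P, a ≤ ‖z‖)
    (hpos : a • A ∈ frontier P) (hneg : -(a • A) ∈ frontier P) {b c : Bool} (hbc : b ≠ c)
    {u v : ℝ} (hu : |u| ≤ a) (hv : |v| ≤ a) :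
    doubleDist P (b, u • A) (c, v • A) = 2 * a - |u + v| := by
  have hdist : ∀ x y : ℝ, ‖x • A - y • A‖ = |x - y| := fun x y => by
    rw [← sub_smul, norm_smul, hA, mul_one, Real.norm_eq_abs]
  obtain ⟨hu₁, hu₂⟩ := abs_le.mp hu
  obtain ⟨hv₁, hv₂⟩ := abs_le.mp hv
  rw [doubleDist, if_neg hbc]
  refine IsLeast.csInf_eq ⟨?_, ?_⟩
  · rcases le_total 0 (u + v) with h | h
    · refine ⟨a • A, hpos, ?_⟩
      simp only [hdist]
      rw [abs_of_nonpos (by linarith), abs_of_nonneg (by linarith), abs_of_nonneg h]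
      ring
    · refine ⟨-(a • A), hneg, ?_⟩
      simp only [← neg_smul, hdist]
      rw [abs_of_nonneg (by linarith), abs_of_nonpos (by linarith), abs_of_nonpos h]
      ring
  · rintro _ ⟨z, hz, rfl⟩
    have htri : ‖z - u • A + (z - v • A) + (u + v) • A‖
        ≤ ‖z - u • A‖ + ‖z - v • A‖ + ‖(u + v) • A‖ := norm_add₃_le
    rw [show z - u • A + (z - v • A) + (u + v) • A = (2 : ℝ) • z by module, norm_smul,
      norm_smul, hA, norm_sub_rev z] at htri
    simp only [Real.norm_eq_abs, abs_two, mul_one] at htri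
    linarith [hfar z hz]

def diameterLoop (a : ℝ) (A : E2) (τ : ℝ) : Bool × E2 :=
  if τ < 2 * a then (false, (a - τ) • A) else (true, (τ - 3 * a) • A)

lemma doubleDist_diameterLoop (hA : ‖A‖ = 1) (hfar : ∀ z ∈ frontier P, a ≤ ‖z‖)
    (hpos : a • A ∈ frontier P) (hneg : -(a • A) ∈ frontier P) {τ σ : ℝ}
    (hτ : τ ∈ Ico 0 (4 * a)) (hσ : σ ∈ Ico 0 (4 * a)) :
    doubleDist P (diameterLoop a A τ) (diameterLoop a A σ)
      = ‖((τ - σ : ℝ) : AddCircle (4 * a))‖ := by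
  obtain ⟨hτ₀, hτ₁⟩ := hτ
  obtain ⟨hσ₀, hσ₁⟩ := hσ
  have hsame : ∀ (b : Bool) (x y : ℝ), doubleDist P (b, x • A) (b, y • A) = |x - y| := by
    intro b x y
    rw [doubleDist, if_pos rfl, ← sub_smul, norm_smul, hA, mul_one, Real.norm_eq_abs]
  have hcircle : ∀ x, |x| < 2 * a → ‖(x : AddCircle (4 * a))‖ = |x| := fun x hx =>
    (AddCircle.norm_coe_eq_abs_iff _ (by linarith)).2
      (by rw [abs_of_pos (show 0 < 4 * a by linarith)]; linarith)
  unfold diameterLoop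
  split_ifs with hτa hσa hσa
  · rw [hsame, hcircle _ (abs_lt.mpr ⟨by linarith, by linarith⟩), abs_sub_comm]
    congr 1; ring
  · rw [doubleDist_smul_of_ne hA hfar hpos hneg (by decide)
      (abs_le.mpr ⟨by linarith, by linarith⟩) (abs_le.mpr ⟨by linarith, by linarith⟩),
      ← neg_sub σ τ, AddCircle.coe_neg, norm_neg,
      AddCircle.norm_coe_eq_half_sub_abs ⟨by linarith, by linarith⟩]
    ring_nf
  · rw [doubleDist_smul_of_ne hA hfar hpos hneg (by decide)
      (abs_le.mpr ⟨by linarith, by linarith⟩) (abs_le.mpr ⟨by linarith, by linarith⟩),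
      AddCircle.norm_coe_eq_half_sub_abs ⟨by linarith, by linarith⟩]
    ring_nf
  · rw [hsame, hcircle _ (abs_lt.mpr ⟨by linarith, by linarith⟩)]
    congr 1; ring

end DiameterLoop

lemma meridian_eq_diameterLoop {n : ℕ} (k : ℕ) (hp : 0 < 4 * cos (π / n)) (t : ℝ) :
    meridian n k t = diameterLoop (cos (π / n)) (outNormal n k) (toIcoMod hp 0 t) := by
  have hred :
      t - 2 * (2 * cos (π / n)) * ⌊t / (2 * (2 * cos (π / n)))⌋ = toIcoMod hp 0 t := by
    rw [← self_sub_toIcoDiv_zsmul, toIcoDiv_eq_floor, zsmul_eq_mul, sub_zero]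
    ring_nf
  simp only [meridian, diameterLoop, hred]
  split_ifs
  · congr 1; module
  · congr 1; module

lemma doubleDist_meridian {m n : ℕ} (hm : 2 ≤ m) (hn : n = 2 * m) (k : ℕ) (s t : ℝ) :
    doubleDist (Pgon n) (meridian n k s) (meridian n k t)
      = ‖((s - t : ℝ) : AddCircle (4 * cos (π / n)))‖ := by
  have hn₀ : 0 < n := by omega
  have hp : 0 < 4 * cos (π / n) := mul_pos four_pos (cos_pi_div_pos (by omega))
  have hneg : -(cos (π / n) • outNormal n k) ∈ frontier (Pgon n) := by
    subst hn
    rw [← smul_neg, ← outNormal_add_half (by omega)]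
    exact cos_smul_outNormal_mem_frontier hn₀ (k + m)
  rw [meridian_eq_diameterLoop k hp, meridian_eq_diameterLoop k hp,
    doubleDist_diameterLoop (norm_outNormal n k)
      (fun z hz => le_norm_of_ball_subset_of_mem_frontier (ball_subset_Pgon hn₀) hz)
      (cos_smul_outNormal_mem_frontier hn₀ k) hneg (toIcoMod_mem_Ico' hp s)
      (toIcoMod_mem_Ico' hp t),
    AddCircle.coe_sub, AddCircle.coe_sub, AddCircle.coe_toIcoMod, AddCircle.coe_toIcoMod]

theorem meridian_is_half_geodesic_general
    (m n : ℕ) (hm : 2 ≤ m) (hn : n = 2 * m) (k : ℕ)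
    (w : ℝ) (hw : w = 2 * Real.cos (π / n)) :
    (∀ t : ℝ, doubleDist (Pgon n) (meridian n k (t + 2 * w)) (meridian n k t) = 0) ∧
    (∀ s t : ℝ, |s - t| ≤ w →
      doubleDist (Pgon n) (meridian n k s) (meridian n k t) = |s - t|) := by
  have hperiod : 2 * w = 4 * cos (π / n) := by rw [hw]; ring
  have hp : 0 < 4 * cos (π / n) := mul_pos four_pos (cos_pi_div_pos (by omega))
  refine ⟨fun t => ?_, fun s t hst => ?_⟩
  · rw [doubleDist_meridian hm hn, add_sub_cancel_left, hperiod, AddCircle.coe_period, norm_zero]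
  · rw [doubleDist_meridian hm hn, AddCircle.norm_coe_eq_abs_iff _ hp.ne', abs_of_pos hp,
      ← hperiod]
    linarith

/-- For `n = 2m` even (`m ≥ 2`), each meridian `γ_k` (`0 ≤ k < m`) of the
double of the regular `n`-gon is a half-geodesic of period `2w` for the
pseudometric `D`: it is `2w`-periodic and minimizes on all subintervals of
length `w = 2 cos(π/n)`. -/
theorem meridian_is_half_geodesic
    (m n : ℕ) (hm : 2 ≤ m) (hn : n = 2 * m) (k : ℕ) (hk : k < m)
    (w : ℝ) (hw : w = 2 * Real.cos (π / n)) :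
    (∀ t : ℝ, doubleDist (Pgon n) (meridian n k (t + 2 * w)) (meridian n k t) = 0) ∧
    (∀ s t : ℝ, |s - t| ≤ w →
      doubleDist (Pgon n) (meridian n k s) (meridian n k t) = |s - t|) :=
  meridian_is_half_geodesic_general m n hm hn k w hw
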